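/- arXiv:2102.13014 — 4 statements merged into one kernel-verified Lean document; each statement's English description precedes it below -/
import Mathlib

section
/- Let ω > 0, c = 2√ω, and γ > 0. Then the function Φ(x) = (4c / ((cx)² + γ))^{1/2} is a positive, even, smooth solution on ℝ of the equation -Φ'' + (c/2)Φ³ - (3/16)γΦ⁵ = 0. -/
open Real MeasureTheory Filter

lemma rpow_neg_half_pow (y : ℝ) (hy : 0 < y) (n : ℕ) :
    y ^ (-((n : ℝ) / 2)) = (Real.sqrt y ^ n)⁻¹ := by
  rw [Real.sqrt_eq_rpow, ← Real.rpow_natCast (y ^ ((1:ℝ)/2)) n, ← Real.rpow_mul hy.le,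
    ← Real.rpow_neg hy.le]
  ring_nf

theorem stmt1 (ω c γ : ℝ) (hω : 0 < ω) (hc : c = 2 * Real.sqrt ω) (hγ : 0 < γ)
    (Φ : ℝ → ℝ)
    (hΦ : ∀ x : ℝ, Φ x = Real.sqrt (4 * c / ((c * x) ^ 2 + γ))) :
    (∀ x, 0 < Φ x) ∧ (∀ x, Φ (-x) = Φ x) ∧ ContDiff ℝ (⊤ : ℕ∞) Φ ∧
      ∀ x, -deriv (deriv Φ) x + (c / 2) * Φ x ^ 3 - (3 / 16) * γ * Φ x ^ 5 = 0 := by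
  have hsq : 0 < Real.sqrt ω := Real.sqrt_pos.mpr hω
  have hc0 : 0 < c := by rw [hc]; positivity
  have hQ : ∀ x : ℝ, 0 < (c * x) ^ 2 + γ := fun x => by positivity
  -- rewrite Φ in rpow form
  have hΦeq : Φ = fun x => Real.sqrt (4 * c) * ((c * x) ^ 2 + γ) ^ (-((1:ℝ) / 2)) := by
    funext x
    rw [hΦ, Real.sqrt_div (by positivity : (0:ℝ) ≤ 4 * c), Real.rpow_neg (hQ x).le,
      ← Real.sqrt_eq_rpow, div_eq_mul_inv]
  set s : ℝ := Real.sqrt (4 * c) with hs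
  have hs0 : 0 < s := Real.sqrt_pos.mpr (by positivity)
  have hs2 : s ^ 2 = 4 * c := Real.sq_sqrt (by positivity)
  -- derivative of the inner polynomial
  have hQ' : ∀ x : ℝ, HasDerivAt (fun x : ℝ => (c * x) ^ 2 + γ) (2 * c ^ 2 * x) x := by
    intro x
    have h1 : HasDerivAt (fun x : ℝ => c * x) c x := by
      simpa using (hasDerivAt_id x).const_mul c
    have := (h1.pow 2).add_const γ
    exact this.congr_deriv (by push_cast; ring)
  -- first derivative
  have hD1 : ∀ x : ℝ, HasDerivAt Φ
      (s * (2 * c ^ 2 * x * -((1:ℝ)/2) * ((c * x) ^ 2 + γ) ^ (-((3:ℝ) / 2)))) x := by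
    intro x
    rw [hΦeq]
    have := ((hQ' x).rpow_const (p := -((1:ℝ)/2)) (Or.inl (hQ x).ne')).const_mul s
    exact this.congr_deriv (by norm_num)
  have hderiv1 : deriv Φ = fun x =>
      s * (2 * c ^ 2 * x * -((1:ℝ)/2) * ((c * x) ^ 2 + γ) ^ (-((3:ℝ) / 2))) :=
    funext fun x => (hD1 x).deriv
  -- second derivative
  have hD2 : ∀ x : ℝ, HasDerivAt (deriv Φ)
      ((-(s * c ^ 2)) * (1 * ((c * x) ^ 2 + γ) ^ (-((3:ℝ) / 2)) +
        x * (2 * c ^ 2 * x * -((3:ℝ)/2) * ((c * x) ^ 2 + γ) ^ (-((5:ℝ) / 2))))) x := by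
    intro x
    rw [hderiv1]
    have hr : HasDerivAt (fun x : ℝ => ((c * x) ^ 2 + γ) ^ (-((3:ℝ) / 2)))
        (2 * c ^ 2 * x * -((3:ℝ)/2) * ((c * x) ^ 2 + γ) ^ (-((5:ℝ) / 2))) x := by
      have := (hQ' x).rpow_const (p := -((3:ℝ)/2)) (Or.inl (hQ x).ne')
      convert this using 2
      norm_num
    have : HasDerivAt (fun y => -(s * c ^ 2) * (y * ((c * y) ^ 2 + γ) ^ (-((3:ℝ) / 2)))) _ x :=
      ((hasDerivAt_id x).mul hr).const_mul (-(s * c ^ 2))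
    convert this using 1
    funext y; ring
    rfl
  refine ⟨fun x => ?_, fun x => ?_, ?_, fun x => ?_⟩
  · rw [hΦ]; exact Real.sqrt_pos.mpr (by positivity)
  · rw [hΦ, hΦ]; ring_nf
  · rw [hΦeq]
    apply ContDiff.mul contDiff_const
    apply ContDiff.rpow_const_of_ne
    · exact ((contDiff_const.mul contDiff_id).pow 2).add contDiff_const
    · exact fun x => (hQ x).ne'
  · -- the ODE
    rw [(hD2 x).deriv, hΦ]
    set y : ℝ := (c * x) ^ 2 + γ with hy
    have hy0 : 0 < y := hQ x
    have ht0 : 0 < Real.sqrt y := Real.sqrt_pos.mpr hy0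
    have ht2 : Real.sqrt y ^ 2 = y := Real.sq_sqrt hy0.le
    have hΦx : Real.sqrt (4 * c / y) = s * (Real.sqrt y)⁻¹ := by
      rw [Real.sqrt_div (by positivity : (0:ℝ) ≤ 4 * c), div_eq_mul_inv]
    have e3 : y ^ (-((3:ℝ) / 2)) = (Real.sqrt y ^ 3)⁻¹ := by
      rw [show (-((3:ℝ)/2)) = -(((3:ℕ):ℝ)/2) by norm_num]; exact rpow_neg_half_pow y hy0 3
    have e5 : y ^ (-((5:ℝ) / 2)) = (Real.sqrt y ^ 5)⁻¹ := by
      rw [show (-((5:ℝ)/2)) = -(((5:ℕ):ℝ)/2) by norm_num]; exact rpow_neg_half_pow y hy0 5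
    rw [hΦx, e3, e5]
    have hyx : Real.sqrt y ^ 2 = (c * x) ^ 2 + γ := ht2
    have hyx' : Real.sqrt y ^ 2 = c ^ 2 * x ^ 2 + γ := by rw [ht2, hy]; ring
    field_simp
    linear_combination s * (16 * c * Real.sqrt y ^ 2 - 6 * γ * (s ^ 2 + 4 * c)) * hs2 +
      96 * s * c ^ 2 * hyx'
end

section
/- Let Φ ∈ C²(ℝ) be a positive even solution of -Φ'' + aΦ + (c/2)Φ³ - (3γ/16)Φ⁵ = 0 decaying at infinity together with its derivatives. If f ∈ H²(ℝ) satisfies L₁₁ f = 0, where L₁₁ f := -f'' + a f + (3c/2)Φ² f - (15γ/16)Φ⁴ f, then f is a scalar multiple of Φ'. -/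
open Real MeasureTheory Filter Set

/-!
`Φ'` solves `L₁₁ y = 0` (differentiate the stationary equation), and so does `f`. Both are
solutions of `y'' = q y` with `q` continuous, so their Wronskian `Φ'' f - Φ' f'` is constant;
it tends to `0` at `+∞`, hence vanishes. Since `Φ → 0` and `Φ > 0`, `Φ'(x₀) ≠ 0` somewhere,
and then `f - (f x₀ / Φ' x₀) Φ'` solves the same equation with zero Cauchy data at `x₀`,
so it vanishes identically by uniqueness for the (linear, hence locally Lipschitz) ODE.
-/

theorem lipschitzWith_linearODE2_field {q : ℝ → ℝ} {C t : ℝ} (hqt : |q t| ≤ C) :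
    LipschitzWith (Real.toNNReal (max 1 C)) fun p : ℝ × ℝ => (p.2, q t * p.1) := by
  refine LipschitzWith.of_dist_le' fun p p' => ?_
  have hC : 0 ≤ C := (abs_nonneg _).trans hqt
  simp only [Prod.dist_eq, Real.dist_eq, ← mul_sub, abs_mul]
  have h₁ := le_max_left |p.1 - p'.1| |p.2 - p'.2|
  have h₂ := le_max_right |p.1 - p'.1| |p.2 - p'.2|
  refine max_le ?_ ?_
  · nlinarith [le_max_left 1 C, abs_nonneg (p.2 - p'.2)]
  · nlinarith [le_max_right 1 C, abs_nonneg (p.1 - p'.1)]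

/-- `y'' = q y`, with the derivative `y'` of `y` supplied explicitly. -/
def SolvesLinearODE2 (q y y' : ℝ → ℝ) : Prop :=
  ∀ t, HasDerivAt y (y' t) t ∧ HasDerivAt y' (q t * y t) t

namespace SolvesLinearODE2

variable {q y y' z z' : ℝ → ℝ}

theorem sub_const_mul (hy : SolvesLinearODE2 q y y') (hz : SolvesLinearODE2 q z z') (k : ℝ) :
    SolvesLinearODE2 q (fun t => z t - k * y t) (fun t => z' t - k * y' t) := fun t =>
  ⟨(hz t).1.sub ((hy t).1.const_mul k),
    ((hz t).2.sub ((hy t).2.const_mul k)).congr_deriv (by ring)⟩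

theorem eq_zero_of_initial_eq_zero (hq : Continuous q) (hy : SolvesLinearODE2 q y y') {t₀ : ℝ}
    (h₀ : y t₀ = 0) (h₀' : y' t₀ = 0) (t : ℝ) : y t = 0 := by
  obtain ⟨a, b, ht, ht₀⟩ : ∃ a b, t ∈ Ioo a b ∧ t₀ ∈ Ioo a b :=
    ⟨min t t₀ - 1, max t t₀ + 1, by constructor <;> constructor <;> grind⟩
  obtain ⟨C, hC⟩ := (isCompact_Icc (a := a) (b := b)).exists_bound_of_continuousOn hq.continuousOn
  have hpair := ODE_solution_unique_of_mem_Ioo (v := fun t (p : ℝ × ℝ) => (p.2, q t * p.1))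
    (s := fun _ => univ) (f := fun t => (y t, y' t)) (g := fun _ => 0)
    (fun s hs => (lipschitzWith_linearODE2_field (hC s (Ioo_subset_Icc_self hs))).lipschitzOnWith)
    ht₀
    (fun s _ => ⟨(hy s).1.prodMk (hy s).2, trivial⟩)
    (fun s _ => ⟨by simpa [Prod.mk_zero_zero] using hasDerivAt_const s (0 : ℝ × ℝ), trivial⟩)
    (by simp [h₀, h₀']) ht
  exact congrArg Prod.fst hpair

theorem hasDerivAt_wronskian (hy : SolvesLinearODE2 q y y') (hz : SolvesLinearODE2 q z z')
    (t : ℝ) : HasDerivAt (fun t => y' t * z t - y t * z' t) 0 t :=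
  (((hy t).2.mul (hz t).1).sub ((hy t).1.mul (hz t).2)).congr_deriv (by ring)

theorem wronskian_eq_zero (hy : SolvesLinearODE2 q y y') (hz : SolvesLinearODE2 q z z')
    (hy₀ : Tendsto y atTop (nhds 0)) (hy'₀ : Tendsto y' atTop (nhds 0))
    (hz₀ : Tendsto z atTop (nhds 0)) (hz'₀ : Tendsto z' atTop (nhds 0)) (t : ℝ) :
    y' t * z t - y t * z' t = 0 := by
  have hconst : ∀ s, y' s * z s - y s * z' s = y' t * z t - y t * z' t := fun s =>
    is_const_of_deriv_eq_zero (fun s => (hasDerivAt_wronskian hy hz s).differentiableAt)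
      (fun s => (hasDerivAt_wronskian hy hz s).deriv) s t
  have hlim := (hy'₀.mul hz₀).sub (hy₀.mul hz'₀)
  simp only [hconst, mul_zero, sub_zero] at hlim
  exact tendsto_nhds_unique tendsto_const_nhds hlim

theorem eq_const_mul_of_wronskian_eq_zero (hq : Continuous q) (hy : SolvesLinearODE2 q y y')
    (hz : SolvesLinearODE2 q z z') (hW : ∀ t, y' t * z t - y t * z' t = 0) {t₀ : ℝ}
    (ht₀ : y t₀ ≠ 0) : ∀ t, z t = z t₀ / y t₀ * y t := by
  set k := z t₀ / y t₀
  have hval : z t₀ - k * y t₀ = 0 := by simp only [k]; field_simp; ring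
  have hder : z' t₀ - k * y' t₀ = 0 := by
    simp only [k]
    field_simp
    linear_combination -hW t₀
  intro t
  linarith [(hy.sub_const_mul hz k).eq_zero_of_initial_eq_zero hq hval hder t]

end SolvesLinearODE2

theorem solvesLinearODE2_deriv_of_deriv_deriv_eq {F F' Φ : ℝ → ℝ} (hΦ : ContDiff ℝ 2 Φ)
    (hF : ∀ u, HasDerivAt F (F' u) u) (hΦeq : ∀ x, deriv (deriv Φ) x = F (Φ x)) :
    SolvesLinearODE2 (fun x => F' (Φ x)) (deriv Φ) (deriv (deriv Φ)) := by
  have hΦ'' : deriv (deriv Φ) = F ∘ Φ := funext hΦeq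
  refine fun x => ⟨(hΦ.deriv' (n := 1)).differentiable one_ne_zero x |>.hasDerivAt, ?_⟩
  rw [hΦ'']
  exact (hF (Φ x)).comp x (hΦ.differentiable two_ne_zero x).hasDerivAt

theorem solvesLinearODE2_of_contDiff {q f : ℝ → ℝ} (hf : ContDiff ℝ 2 f)
    (hfeq : ∀ x, deriv (deriv f) x = q x * f x) : SolvesLinearODE2 q f (deriv f) := fun x =>
  ⟨(hf.differentiable two_ne_zero x).hasDerivAt, by
    simpa [hfeq] using ((hf.deriv' (n := 1)).differentiable one_ne_zero x).hasDerivAt⟩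

theorem exists_deriv_ne_zero_of_tendsto {Φ : ℝ → ℝ} (hΦ : Differentiable ℝ Φ) {x₀ : ℝ}
    (hx₀ : 0 < Φ x₀) (hΦ₀ : Tendsto Φ atTop (nhds 0)) : ∃ x, deriv Φ x ≠ 0 := by
  by_contra! h
  rw [funext fun x => is_const_of_deriv_eq_zero hΦ h x x₀] at hΦ₀
  exact hx₀.ne' (tendsto_nhds_unique tendsto_const_nhds hΦ₀)

theorem stmt3_general (a c γ : ℝ) (Φ f : ℝ → ℝ)
    (hΦpos : ∀ x, 0 < Φ x) (hΦC2 : ContDiff ℝ 2 Φ)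
    (hΦ0 : Tendsto Φ atTop (nhds 0))
    (hΦ'0 : Tendsto (deriv Φ) atTop (nhds 0))
    (hΦ''0 : Tendsto (deriv (deriv Φ)) atTop (nhds 0))
    (hΦeq : ∀ x, -deriv (deriv Φ) x + a * Φ x + (c / 2) * Φ x ^ 3
      - (3 * γ / 16) * Φ x ^ 5 = 0)
    (hfC2 : ContDiff ℝ 2 f)
    (hf0 : Tendsto f atTop (nhds 0))
    (hf'0 : Tendsto (deriv f) atTop (nhds 0))
    (hfeq : ∀ x, -deriv (deriv f) x + a * f x + (3 * c / 2) * Φ x ^ 2 * f x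
      - (15 * γ / 16) * Φ x ^ 4 * f x = 0) :
    ∃ k : ℝ, ∀ x, f x = k * deriv Φ x := by
  have hF : ∀ u : ℝ, HasDerivAt (fun u => a * u + (c / 2) * u ^ 3 - (3 * γ / 16) * u ^ 5)
      (a + (3 * c / 2) * u ^ 2 - (15 * γ / 16) * u ^ 4) u := fun u => by
    have hu := hasDerivAt_id' u
    exact (((hu.const_mul a).add ((hu.fun_pow 3).const_mul (c / 2))).sub
      ((hu.fun_pow 5).const_mul (3 * γ / 16))).congr_deriv (by push_cast; ring)
  have hΦ' := solvesLinearODE2_deriv_of_deriv_deriv_eq hΦC2 hF fun x => by linarith [hΦeq x]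
  have hf : SolvesLinearODE2 (fun x => a + (3 * c / 2) * Φ x ^ 2 - (15 * γ / 16) * Φ x ^ 4) f
      (deriv f) :=
    solvesLinearODE2_of_contDiff hfC2 fun x => by linarith [hfeq x]
  have hq : Continuous fun x => a + (3 * c / 2) * Φ x ^ 2 - (15 * γ / 16) * Φ x ^ 4 := by
    have := hΦC2.continuous
    fun_prop
  obtain ⟨x₀, hx₀⟩ :=
    exists_deriv_ne_zero_of_tendsto (hΦC2.differentiable two_ne_zero) (hΦpos 0) hΦ0
  exact ⟨_, hΦ'.eq_const_mul_of_wronskian_eq_zero hq hf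
    (hΦ'.wronskian_eq_zero hf hΦ'0 hΦ''0 hf0 hf'0) hx₀⟩

/-- Nondegeneracy of the kernel of `L₁₁ = -∂ₓ² + a + (3c/2)Φ² - (15γ/16)Φ⁴`:
any `H²` kernel element is a multiple of `Φ'`. -/
theorem stmt3 (a c γ : ℝ) (ha : 0 < a) (Φ f : ℝ → ℝ)
    (hΦpos : ∀ x, 0 < Φ x) (hΦeven : ∀ x, Φ (-x) = Φ x) (hΦC2 : ContDiff ℝ 2 Φ)
    (hΦ0 : Tendsto Φ atTop (nhds 0)) (hΦ0' : Tendsto Φ atBot (nhds 0))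
    (hΦ'0 : Tendsto (deriv Φ) atTop (nhds 0)) (hΦ'0' : Tendsto (deriv Φ) atBot (nhds 0))
    (hΦ''0 : Tendsto (deriv (deriv Φ)) atTop (nhds 0))
    (hΦ''0' : Tendsto (deriv (deriv Φ)) atBot (nhds 0))
    (hΦeq : ∀ x, -deriv (deriv Φ) x + a * Φ x + (c / 2) * Φ x ^ 3
      - (3 * γ / 16) * Φ x ^ 5 = 0)
    (hfC2 : ContDiff ℝ 2 f)
    (hfL2 : Integrable (fun x => f x ^ 2)) (hf'L2 : Integrable (fun x => deriv f x ^ 2))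
    (hf0 : Tendsto f atTop (nhds 0)) (hf0' : Tendsto f atBot (nhds 0))
    (hf'0 : Tendsto (deriv f) atTop (nhds 0)) (hf'0' : Tendsto (deriv f) atBot (nhds 0))
    (hfeq : ∀ x, -deriv (deriv f) x + a * f x + (3 * c / 2) * Φ x ^ 2 * f x
      - (15 * γ / 16) * Φ x ^ 4 * f x = 0) :
    ∃ k : ℝ, ∀ x, f x = k * deriv Φ x :=
  stmt3_general a c γ Φ f hΦpos hΦC2 hΦ0 hΦ'0 hΦ''0 hΦeq hfC2 hf0 hf'0 hfeq
end

section
/- Let Φ : ℝ → ℝ be smooth, positive, with Φ and Φ' decaying at infinity, and set η'(x) = c/2 - Φ(x)²/4. For w = f + i g ∈ H¹(ℝ,ℂ) with f, g real, define the quadratic form B(w) = ⟨L₁₁ f, f⟩ + ⟨L₁₂ g, f⟩ + (1/4)⟨Φ⁴ f, f⟩ + ⟨L₂₁ f, g⟩ + ⟨L₂₂ g, g⟩, where L₁₂ g = (1/2)Φ² g' - (1/2)ΦΦ' g and L₂₁ f = -(1/2)Φ² f' - (3/2)ΦΦ' f, and L₂₂ = -∂ₓ² + a + (c/2)Φ²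 - (3γ/16)Φ⁴ annihilates Φ (i.e. L₂₂Φ = 0). Then B(w) = ⟨L₁₁ f, f⟩ + (1/4)‖Φ² f + 2Φ ∂ₓ(Φ⁻¹ g)‖²_{L²}. -/
open Real MeasureTheory Filter

/-- Quadratic-form factorization (Lemma 2.3):
`B(w) = ⟨L₁₁f,f⟩ + (1/4)‖Φ²f + 2Φ∂ₓ(Φ⁻¹g)‖²` for `w = f + ig`. -/
theorem stmt4 (a c γ : ℝ) (Φ f g : ℝ → ℝ)
    (hΦ : ContDiff ℝ (⊤ : ℕ∞) Φ) (hΦpos : ∀ x, 0 < Φ x)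
    (hΦ0 : Tendsto Φ atTop (nhds 0)) (hΦ0' : Tendsto Φ atBot (nhds 0))
    (hΦ'0 : Tendsto (deriv Φ) atTop (nhds 0)) (hΦ'0' : Tendsto (deriv Φ) atBot (nhds 0))
    (hΦker : ∀ x, -deriv (deriv Φ) x + a * Φ x + (c / 2) * Φ x ^ 3
      - (3 * γ / 16) * Φ x ^ 5 = 0)
    (hf : ContDiff ℝ 2 f) (hg : ContDiff ℝ 2 g)
    (hf0 : Tendsto f atTop (nhds 0)) (hf0' : Tendsto f atBot (nhds 0))
    (hf'0 : Tendsto (deriv f) atTop (nhds 0)) (hf'0' : Tendsto (deriv f) atBot (nhds 0))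
    (hg0 : Tendsto g atTop (nhds 0)) (hg0' : Tendsto g atBot (nhds 0))
    (hg'0 : Tendsto (deriv g) atTop (nhds 0)) (hg'0' : Tendsto (deriv g) atBot (nhds 0))
    (hfL2 : Integrable (fun x => f x ^ 2)) (hf'L2 : Integrable (fun x => deriv f x ^ 2))
    (hgL2 : Integrable (fun x => g x ^ 2)) (hg'L2 : Integrable (fun x => deriv g x ^ 2))
    (hI1 : Integrable (fun x => (-deriv (deriv f) x + a * f x + (3 * c / 2) * Φ x ^ 2 * f x
      - (15 * γ / 16) * Φ x ^ 4 * f x) * f x))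
    (hI2 : Integrable (fun x => ((1 / 2) * Φ x ^ 2 * deriv g x
      - (1 / 2) * Φ x * deriv Φ x * g x) * f x))
    (hI3 : Integrable (fun x => Φ x ^ 4 * f x ^ 2))
    (hI4 : Integrable (fun x => (-(1 / 2) * Φ x ^ 2 * deriv f x
      - (3 / 2) * Φ x * deriv Φ x * f x) * g x))
    (hI5 : Integrable (fun x => (-deriv (deriv g) x + a * g x + (c / 2) * Φ x ^ 2 * g x
      - (3 * γ / 16) * Φ x ^ 4 * g x) * g x))
    (hI6 : Integrable (fun x =>
      (Φ x ^ 2 * f x + 2 * Φ x * deriv (fun y => g y / Φ y) x) ^ 2)) :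
    (∫ x, (-deriv (deriv f) x + a * f x + (3 * c / 2) * Φ x ^ 2 * f x
        - (15 * γ / 16) * Φ x ^ 4 * f x) * f x)
      + (∫ x, ((1 / 2) * Φ x ^ 2 * deriv g x - (1 / 2) * Φ x * deriv Φ x * g x) * f x)
      + (1 / 4) * (∫ x, Φ x ^ 4 * f x ^ 2)
      + (∫ x, (-(1 / 2) * Φ x ^ 2 * deriv f x - (3 / 2) * Φ x * deriv Φ x * f x) * g x)
      + (∫ x, (-deriv (deriv g) x + a * g x + (c / 2) * Φ x ^ 2 * g x
        - (3 * γ / 16) * Φ x ^ 4 * g x) * g x)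
    = (∫ x, (-deriv (deriv f) x + a * f x + (3 * c / 2) * Φ x ^ 2 * f x
        - (15 * γ / 16) * Φ x ^ 4 * f x) * f x)
      + (1 / 4) * ∫ x, (Φ x ^ 2 * f x + 2 * Φ x * deriv (fun y => g y / Φ y) x) ^ 2 := by
  -- smoothness bookkeeping
  have hΦinf : ContDiff ℝ ((⊤ : ℕ∞) : WithTop ℕ∞) Φ := hΦ.of_le (by simp)
  have hΦderiv : ContDiff ℝ ((⊤ : ℕ∞) : WithTop ℕ∞) (deriv Φ) :=
    (contDiff_infty_iff_deriv.mp hΦinf).2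
  have hΦne : ∀ x, Φ x ≠ 0 := fun x => (hΦpos x).ne'
  have dΦ : ∀ x, HasDerivAt Φ (deriv Φ x) x :=
    fun x => ((hΦinf.differentiable (by simp)) x).hasDerivAt
  have dΦ' : ∀ x, HasDerivAt (deriv Φ) (deriv (deriv Φ) x) x :=
    fun x => ((hΦderiv.differentiable (by simp)) x).hasDerivAt
  have hf2 : ContDiff ℝ (1 + 1) f := by norm_num; exact hf
  have hg2 : ContDiff ℝ (1 + 1) g := by norm_num; exact hg
  have df : ∀ x, HasDerivAt f (deriv f x) x :=
    fun x => ((hf.differentiable (by norm_num)) x).hasDerivAt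
  have dg : ∀ x, HasDerivAt g (deriv g x) x :=
    fun x => ((hg.differentiable (by norm_num)) x).hasDerivAt
  have df' : ∀ x, HasDerivAt (deriv f) (deriv (deriv f) x) x :=
    fun x => (((contDiff_succ_iff_deriv.mp hf2).2.2.differentiable one_ne_zero) x).hasDerivAt
  have dg' : ∀ x, HasDerivAt (deriv g) (deriv (deriv g) x) x :=
    fun x => (((contDiff_succ_iff_deriv.mp hg2).2.2.differentiable one_ne_zero) x).hasDerivAt
  have hdiv : ∀ x, deriv (fun y => g y / Φ y) x
      = (deriv g x * Φ x - g x * deriv Φ x) / Φ x ^ 2 :=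
    fun x => ((dg x).div (dΦ x) (hΦne x)).deriv
  have hker : ∀ x, deriv (deriv Φ) x
      = a * Φ x + (c / 2) * Φ x ^ 3 - (3 * γ / 16) * Φ x ^ 5 :=
    fun x => by linarith [hΦker x]
  -- first integral of the ODE : Φ'^2 = aΦ² + (c/4)Φ⁴ - (γ/16)Φ⁶
  have hΦsq : ∀ x, deriv Φ x ^ 2
      = a * Φ x ^ 2 + (c / 4) * Φ x ^ 4 - (γ / 16) * Φ x ^ 6 := by
    set En : ℝ → ℝ := fun x =>
      deriv Φ x ^ 2 - a * Φ x ^ 2 - (c / 4) * Φ x ^ 4 + (γ / 16) * Φ x ^ 6 with hEn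
    have dEn : ∀ x, HasDerivAt En 0 x := by
      intro x
      have H : HasDerivAt En
          ((((2 : ℕ) * deriv Φ x ^ 1 * deriv (deriv Φ) x)
            - a * ((2 : ℕ) * Φ x ^ 1 * deriv Φ x))
            - (c / 4) * ((4 : ℕ) * Φ x ^ 3 * deriv Φ x)
            + (γ / 16) * ((6 : ℕ) * Φ x ^ 5 * deriv Φ x)) x := by
        exact ((((dΦ' x).pow 2).sub (((dΦ x).pow 2).const_mul a)).sub
          (((dΦ x).pow 4).const_mul (c / 4))).add (((dΦ x).pow 6).const_mul (γ / 16))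
      convert H using 1
      rw [hker x]; push_cast; ring
    have hconst : ∀ x y, En x = En y := is_const_of_deriv_eq_zero
      (fun x => (dEn x).differentiableAt) (fun x => (dEn x).deriv)
    have hEn0 : ∀ x, En x = 0 := by
      intro x
      have h1 : Tendsto En atTop (nhds (En x)) := by
        have hx : En = fun _ => En x := funext fun y => hconst y x
        rw [hx]; exact tendsto_const_nhds
      have h2 : Tendsto En atTop (nhds 0) := by
        have h3 : Tendsto En atTop (nhds
            ((0 : ℝ) ^ 2 - a * 0 ^ 2 - (c / 4) * 0 ^ 4 + (γ / 16) * 0 ^ 6)) := by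
          exact (((hΦ'0.pow 2).sub ((hΦ0.pow 2).const_mul a)).sub
            ((hΦ0.pow 4).const_mul (c / 4))).add ((hΦ0.pow 6).const_mul (γ / 16))
        norm_num at h3; exact h3
      exact tendsto_nhds_unique h1 h2
    intro x
    have h := hEn0 x
    simp only [hEn] at h
    linarith
  -- the potential for the combined integrand
  set G : ℝ → ℝ := fun x =>
    -(1 / 2) * Φ x ^ 2 * f x * g x - g x * deriv g x + deriv Φ x * g x ^ 2 / Φ x with hG
  set D : ℝ → ℝ := fun x =>
    ((1 / 2) * Φ x ^ 2 * deriv g x - (1 / 2) * Φ x * deriv Φ x * g x) * f x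
    + (1 / 4) * (Φ x ^ 4 * f x ^ 2)
    + (-(1 / 2) * Φ x ^ 2 * deriv f x - (3 / 2) * Φ x * deriv Φ x * f x) * g x
    + (-deriv (deriv g) x + a * g x + (c / 2) * Φ x ^ 2 * g x
        - (3 * γ / 16) * Φ x ^ 4 * g x) * g x
    - (1 / 4) * ((Φ x ^ 2 * f x + 2 * Φ x * deriv (fun y => g y / Φ y) x) ^ 2) with hD
  have hGder : ∀ x, HasDerivAt G (D x) x := by
    intro x
    have H := ((((((dΦ x).pow 2).const_mul ((-(1 / 2) : ℝ))).mul (df x)).mul (dg x)).sub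
        ((dg x).mul (dg' x))).add (((dΦ' x).mul ((dg x).pow 2)).div (dΦ x) (hΦne x))
    refine H.congr_deriv ?_
    simp only [hD, Pi.pow_apply, Pi.mul_apply, Pi.div_apply]
    rw [hdiv x, hker x]
    have hne := hΦne x
    field_simp
    ring
  -- integrability of the combination
  have A1 : Integrable (fun x => (1 / 4) * (Φ x ^ 4 * f x ^ 2)) := hI3.const_mul _
  have A2 : Integrable (fun x =>
      ((1 / 2) * Φ x ^ 2 * deriv g x - (1 / 2) * Φ x * deriv Φ x * g x) * f x
      + (1 / 4) * (Φ x ^ 4 * f x ^ 2)) := hI2.add A1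
  have A3 : Integrable (fun x =>
      ((1 / 2) * Φ x ^ 2 * deriv g x - (1 / 2) * Φ x * deriv Φ x * g x) * f x
      + (1 / 4) * (Φ x ^ 4 * f x ^ 2)
      + (-(1 / 2) * Φ x ^ 2 * deriv f x - (3 / 2) * Φ x * deriv Φ x * f x) * g x) := A2.add hI4
  have A4 : Integrable (fun x =>
      ((1 / 2) * Φ x ^ 2 * deriv g x - (1 / 2) * Φ x * deriv Φ x * g x) * f x
      + (1 / 4) * (Φ x ^ 4 * f x ^ 2)
      + (-(1 / 2) * Φ x ^ 2 * deriv f x - (3 / 2) * Φ x * deriv Φ x * f x) * g x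
      + (-deriv (deriv g) x + a * g x + (c / 2) * Φ x ^ 2 * g x
          - (3 * γ / 16) * Φ x ^ 4 * g x) * g x) := A3.add hI5
  have A6 : Integrable (fun x =>
      (1 / 4) * ((Φ x ^ 2 * f x + 2 * Φ x * deriv (fun y => g y / Φ y) x) ^ 2)) :=
    hI6.const_mul _
  have hDint : Integrable D := A4.sub A6
  -- limits of G at ±∞
  have hGlim : ∀ l : Filter ℝ, Tendsto Φ l (nhds 0) → Tendsto (deriv Φ) l (nhds 0) →
      Tendsto f l (nhds 0) → Tendsto g l (nhds 0) → Tendsto (deriv g) l (nhds 0) →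
      Tendsto G l (nhds 0) := by
    intro l lΦ lΦ' lf lg lg'
    have t1 : Tendsto (fun x => -(1 / 2) * Φ x ^ 2 * f x * g x) l (nhds 0) := by
      have h1 := (((lΦ.pow 2).const_mul (-(1 / 2) : ℝ)).mul lf).mul lg
      simpa using h1
    have t2 : Tendsto (fun x => g x * deriv g x) l (nhds 0) := by
      simpa using lg.mul lg'
    have hq2 : ∀ x, (deriv Φ x * g x ^ 2 / Φ x) ^ 2
        = (a + (c / 4) * Φ x ^ 2 - (γ / 16) * Φ x ^ 4) * (g x ^ 2) ^ 2 := by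
      intro x
      have h := hΦsq x
      have hne := hΦne x
      field_simp
      linear_combination 64 * (g x ^ 2) ^ 2 * h
    have hq2t : Tendsto (fun x => (deriv Φ x * g x ^ 2 / Φ x) ^ 2) l (nhds 0) := by
      simp only [hq2]
      have h2 := ((tendsto_const_nhds (x := a)).add ((lΦ.pow 2).const_mul (c / 4))
        |>.sub ((lΦ.pow 4).const_mul (γ / 16))).mul ((lg.pow 2).pow 2)
      simpa using h2
    have habs : Tendsto (fun x => |deriv Φ x * g x ^ 2 / Φ x|) l (nhds 0) := by
      have hsq : (fun x => |deriv Φ x * g x ^ 2 / Φ x|)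
          = fun x => Real.sqrt ((deriv Φ x * g x ^ 2 / Φ x) ^ 2) :=
        funext fun x => (Real.sqrt_sq_eq_abs _).symm
      rw [hsq]
      have := (Real.continuous_sqrt.tendsto 0).comp hq2t
      simpa [Function.comp_def] using this
    have t3 : Tendsto (fun x => deriv Φ x * g x ^ 2 / Φ x) l (nhds 0) :=
      (tendsto_zero_iff_abs_tendsto_zero _).mpr habs
    rw [hG]
    simpa using (t1.sub t2).add t3
  have hGtop : Tendsto G atTop (nhds 0) := hGlim atTop hΦ0 hΦ'0 hf0 hg0 hg'0
  have hGbot : Tendsto G atBot (nhds 0) := hGlim atBot hΦ0' hΦ'0' hf0' hg0' hg'0'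
  -- the main integral identity
  have hzero : ∫ x, D x = 0 := by
    have := integral_of_hasDerivAt_of_tendsto hGder hDint hGbot hGtop
    simpa using this
  have hsplit : ∫ x, D x
      = (∫ x, ((1 / 2) * Φ x ^ 2 * deriv g x - (1 / 2) * Φ x * deriv Φ x * g x) * f x)
        + (1 / 4) * (∫ x, Φ x ^ 4 * f x ^ 2)
        + (∫ x, (-(1 / 2) * Φ x ^ 2 * deriv f x - (3 / 2) * Φ x * deriv Φ x * f x) * g x)
        + (∫ x, (-deriv (deriv g) x + a * g x + (c / 2) * Φ x ^ 2 * g x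
            - (3 * γ / 16) * Φ x ^ 4 * g x) * g x)
        - (1 / 4) * (∫ x, (Φ x ^ 2 * f x + 2 * Φ x * deriv (fun y => g y / Φ y) x) ^ 2) := by
    simp only [hD]
    rw [integral_sub A4 A6, integral_add A3 hI5, integral_add A2 hI4, integral_add hI2 A1,
      integral_const_mul, integral_const_mul]
  rw [hzero] at hsplit
  linarith [hsplit]
end

section
/- Let χ₁₁ ∈ H²(ℝ) be real with ‖χ₁₁‖_{L²} = 1 and L₁₁χ₁₁ = λ₁₁χ₁₁ with λ₁₁ < 0, and let Φ be as in the quadratic-form factorization B(f+ig) = ⟨L₁₁f,f⟩ + (1/4)‖Φ²f + 2Φ∂ₓ(Φ⁻¹g)‖²_{L²}. Set χ₁₂(x) = -(1/2)Φ(x)∫_{-∞}^x Φχ₁₁ dy and χ* = χ₁₁ + iχ₁₂. Then Φ∂ₓ(Φ⁻¹χ₁₂) = -(1/2)Φ²χ₁₁ and B(χ*) = λ₁₁ < 0. -/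
open Real MeasureTheory Filter

/-- Construction of the negative direction (proof of Lemma 2.5): with
`χ₁₂(x) = -(1/2)Φ(x)∫_{-∞}^x Φχ₁₁`, one has `Φ∂ₓ(Φ⁻¹χ₁₂) = -(1/2)Φ²χ₁₁`, and the
factorized quadratic form evaluated at `χ* = χ₁₁ + iχ₁₂` equals `λ₁₁ < 0`. -/
theorem stmt17 (U : ℝ → ℝ) (lam : ℝ) (hlam : lam < 0)
    (Φ χ₁₁ χ₁₂ : ℝ → ℝ)
    (hΦ : ContDiff ℝ (⊤ : ℕ∞) Φ) (hΦpos : ∀ x, 0 < Φ x)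
    (hχC2 : ContDiff ℝ 2 χ₁₁)
    (hL2 : Integrable (fun x => χ₁₁ x ^ 2))
    (hnorm : ∫ x : ℝ, χ₁₁ x ^ 2 = 1)
    (hintΦχ : Integrable (fun x => Φ x * χ₁₁ x))
    (heig : ∀ x, -deriv (deriv χ₁₁) x + U x * χ₁₁ x = lam * χ₁₁ x)
    (hχ₁₂ : ∀ x, χ₁₂ x = -(1 / 2) * Φ x * ∫ y in Set.Iio x, Φ y * χ₁₁ y) :
    (∀ x, Φ x * deriv (fun y => χ₁₂ y / Φ y) x = -(1 / 2) * Φ x ^ 2 * χ₁₁ x) ∧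
    (∫ x : ℝ, (-deriv (deriv χ₁₁) x + U x * χ₁₁ x) * χ₁₁ x)
      + (1 / 4) * (∫ x : ℝ,
          (Φ x ^ 2 * χ₁₁ x + 2 * Φ x * deriv (fun y => χ₁₂ y / Φ y) x) ^ 2)
      = lam := by
  have hcont : Continuous fun y => Φ y * χ₁₁ y := hΦ.continuous.mul hχC2.continuous
  -- rewrite the quotient
  have hratio : (fun y => χ₁₂ y / Φ y)
      = fun x => -(1 / 2) * ((∫ y in Set.Iio (0:ℝ), Φ y * χ₁₁ y)
          + ∫ y in (0:ℝ)..x, Φ y * χ₁₁ y) := by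
    funext x
    have hΦx := (hΦpos x).ne'
    have hsplit : (∫ y in Set.Iio x, Φ y * χ₁₁ y)
        = (∫ y in Set.Iio (0:ℝ), Φ y * χ₁₁ y) + ∫ y in (0:ℝ)..x, Φ y * χ₁₁ y := by
      rw [← MeasureTheory.integral_Iic_eq_integral_Iio,
        ← MeasureTheory.integral_Iic_eq_integral_Iio,
        ← intervalIntegral.integral_Iic_sub_Iic hintΦχ.integrableOn hintΦχ.integrableOn]
      ring
    rw [hχ₁₂ x, hsplit]
    field_simp
  have hderiv : ∀ x, deriv (fun y => χ₁₂ y / Φ y) x = -(1 / 2) * (Φ x * χ₁₁ x) := by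
    intro x
    have hFTC : HasDerivAt (fun x => ∫ y in (0:ℝ)..x, Φ y * χ₁₁ y) (Φ x * χ₁₁ x) x :=
      intervalIntegral.integral_hasDerivAt_right hintΦχ.intervalIntegrable
        (hcont.stronglyMeasurableAtFilter _ _) hcont.continuousAt
    have : HasDerivAt (fun x => -(1 / 2) * ((∫ y in Set.Iio (0:ℝ), Φ y * χ₁₁ y)
          + ∫ y in (0:ℝ)..x, Φ y * χ₁₁ y)) (-(1 / 2) * (Φ x * χ₁₁ x)) x := by
      simpa using ((hFTC.const_add _).const_mul (-(1/2) : ℝ))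
    rw [hratio]
    exact this.deriv
  have h1 : ∀ x, Φ x * deriv (fun y => χ₁₂ y / Φ y) x = -(1 / 2) * Φ x ^ 2 * χ₁₁ x := by
    intro x; rw [hderiv x]; ring
  refine ⟨h1, ?_⟩
  have h2 : (∫ x : ℝ,
      (Φ x ^ 2 * χ₁₁ x + 2 * Φ x * deriv (fun y => χ₁₂ y / Φ y) x) ^ 2) = 0 := by
    have : ∀ x : ℝ, (Φ x ^ 2 * χ₁₁ x + 2 * Φ x * deriv (fun y => χ₁₂ y / Φ y) x) ^ 2 = 0 := by
      intro x
      have := h1 x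
      nlinarith [this]
    simp only [this, integral_zero]
  have h3 : (∫ x : ℝ, (-deriv (deriv χ₁₁) x + U x * χ₁₁ x) * χ₁₁ x) = lam := by
    have : ∀ x : ℝ, (-deriv (deriv χ₁₁) x + U x * χ₁₁ x) * χ₁₁ x = lam * χ₁₁ x ^ 2 := by
      intro x; rw [heig x]; ring
    simp only [this]
    rw [integral_const_mul, hnorm, mul_one]
  rw [h2, h3]; ring
end
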